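/- (Characterization of co-exact elements) For all natural numbers k ≥ 1 and q ≥ 1 with n = k + q, the three subspaces of H_{k,q} coincide: H_{k,q}^− = ker(d̆*_{q−1} : H_{k,q} → H_{k+1,q−1}) = im(d̆*_q : H_{k−1,q+1} → H_{k,q}). -/

import Mathlib

open scoped BigOperators

noncomputable section

variable (F : Type*) [Field F] [CharZero F] (H : Type*) [AddCommGroup H] [Module F H]

/-- The `n`-th tensor power of `H` over `F`. -/
abbrev TP (n : ℕ) : Type _ := PiTensorProduct F (fun _ : Fin n => H)

/-- The action of a permutation `σ ∈ S_n` on the `n`-th tensor power,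
permuting the tensor factors. -/
def permMap (n : ℕ) (σ : Equiv.Perm (Fin n)) : TP F H n →ₗ[F] TP F H n :=
  (PiTensorProduct.reindex F (fun _ : Fin n => H) σ).toLinearMap

/-- Identification of tensor powers of equal degrees. -/
def tpCast {m m' : ℕ} (hm : m = m') : TP F H m →ₗ[F] TP F H m' :=
  (PiTensorProduct.reindex F (fun _ : Fin m => H) (finCongr hm)).toLinearMap

/-- The permutations of `{1, …, n}` moving only positions in `a`. -/
def permsOn (n : ℕ) (a : Finset (Fin n)) : Finset (Equiv.Perm (Fin n)) :=
  Finset.univ.filter fun σ => ∀ i, i ∉ a → σ i = i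

/-- `S_a`: symmetrisation over the positions in `a` (the average over all
permutations of the positions in `a`, fixing the other positions). -/
def symOn (n : ℕ) (a : Finset (Fin n)) : TP F H n →ₗ[F] TP F H n :=
  (a.card.factorial : F)⁻¹ • ∑ σ ∈ permsOn n a, permMap F H n σ

/-- `A_a`: skew-symmetrisation over the positions in `a` (the signed average over
all permutations of the positions in `a`, fixing the other positions). -/
def altOn (n : ℕ) (a : Finset (Fin n)) : TP F H n →ₗ[F] TP F H n :=
  (a.card.factorial : F)⁻¹ • ∑ σ ∈ permsOn n a, (Equiv.Perm.sign σ : ℤ) • permMap F H n σ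

/-- The first `k` positions of `{1, …, n}`. -/
def firstSet (n k : ℕ) : Finset (Fin n) := Finset.univ.filter fun i => (i : ℕ) < k

/-- The last `m` positions of `{1, …, n}`. -/
def lastSet (n m : ℕ) : Finset (Fin n) := Finset.univ.filter fun i => n - m ≤ (i : ℕ)

/-- `H^{⊙a,∧aᶜ}`: the image of `S_a ∘ A_{aᶜ}`, the subspace of `n`-tensors symmetric in
the positions of `a` and skew-symmetric in the positions of `aᶜ`. -/
def Hgen (n : ℕ) (a : Finset (Fin n)) : Submodule F (TP F H n) :=
  LinearMap.range (symOn F H n a ∘ₗ altOn F H n aᶜ)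

/-- `H_{k,n-k} = H^{⊙k} ⊗ H^{∧(n-k)}`: the subspace of `n`-tensors symmetric in the
first `k` positions and skew-symmetric in the remaining positions. -/
def Hmix (n k : ℕ) : Submodule F (TP F H n) := Hgen F H n (firstSet n k)

/-- `H^{⊙[k],∧[n-k]}`: the span of the subspaces `H^{⊙a,∧aᶜ}` over all `k`-element
subsets `a ⊆ {1, …, n}`. -/
def HmixSpan (n k : ℕ) : Submodule F (TP F H n) :=
  ⨆ a ∈ {a : Finset (Fin n) | a.card = k}, Hgen F H n a

/-- The global operator whose restriction to `H_{k,q}` (with `m = q + 1`, `n = k + q`)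
is `d̆_q`: skew-symmetrisation of the last `m` positions, scaled by `m`. -/
def dOp (n m : ℕ) : TP F H n →ₗ[F] TP F H n := (m : F) • altOn F H n (lastSet n m)

/-- The global operator whose restriction to `H_{k-1,q+1}` (with `m = k`, `n = k + q`)
is `d̆*_q`: symmetrisation of the first `m` positions, scaled by `m`. -/
def dStarOp (n m : ℕ) : TP F H n →ₗ[F] TP F H n := (m : F) • symOn F H n (firstSet n m)

/-- The elementary element `h₁⊙…⊙h_k ⊗ x₁∧…∧x_q` of `H_{k,q} ⊆ H^{⊗(k+q)}`. -/
def elem (k q : ℕ) (h : Fin k → H) (x : Fin q → H) : TP F H (k + q) :=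
  ∑ ρ : Equiv.Perm (Fin k), ∑ τ : Equiv.Perm (Fin q),
    (Equiv.Perm.sign τ : ℤ) •
      (PiTensorProduct.tprod F (Fin.append (h ∘ ρ) (x ∘ τ)) : TP F H (k + q))

/-!
We work in an arbitrary representation `ρ` of `S_n`, with `S_b`, `A_b` the (skew-)symmetrisers,
`a` the first `k` positions, `x` the `k`-th and `y` the `(k+1)`-st, so that
`H_{k,q} = range (S_a A_{aᶜ})`, `d̆*_q = k S_a` and `ker d̆*_{q-1} = ker S_{a ∪ {y}}`.

Every `H^{⊙b,∧bᶜ}` with `|b| = k - 1` is killed by `S_{a ∪ {y}}`, since two of its skew positions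
lie in `a ∪ {y}`. `S_a` maps `H_{k-1,q+1}` into `H_{k,q}` and into the span of the `H^{⊙σb,∧σbᶜ}`,
as `ρ σ` carries `H^{⊙b,∧bᶜ}` to `H^{⊙σb,∧σbᶜ}`. These give the easy inclusions.

For the remaining one, let `E = S_a A_{aᶜ}`. Expanding `S_{a ∪ {y}}` and `A_{aᶜ ∪ {x}}` over
transpositions, and using that `E ρ(i j) E` is the same for all `i ∈ a`, `j ∉ a`, gives
`q (k+1) E S_{a ∪ {y}} E + k (q+1) E A_{aᶜ ∪ {x}} E = n E`. Hence every `v ∈ H_{k,q}` with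
`S_{a ∪ {y}} v = 0` is a nonzero multiple of `S_a A_{aᶜ ∪ {x}} v = S_a (S_{a∖x} A_{(a∖x)ᶜ} v)`.
-/

open Equiv Finset

section PermsOn

variable {n : ℕ} {a b : Finset (Fin n)} {σ τ : Perm (Fin n)}

lemma mem_permsOn : σ ∈ permsOn n a ↔ ∀ i ∉ a, σ i = i := by
  simp [permsOn]

lemma mem_permsOn_iff_mem_range_ofSubtype :
    σ ∈ permsOn n a ↔ σ ∈ (Perm.ofSubtype : Perm {i // i ∈ a} →* Perm (Fin n)).range := by
  rw [Perm.mem_range_ofSubtype_iff, mem_permsOn]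
  refine ⟨fun h i hi => ?_, fun h i hi => ?_⟩
  · by_contra hia
    exact Perm.mem_support.mp hi (h i hia)
  · by_contra hσi
    exact hi (h (Perm.mem_support.mpr hσi))

lemma card_permsOn (a : Finset (Fin n)) : #(permsOn n a) = (#a).factorial := by
  have : permsOn n a = univ.map ⟨Perm.ofSubtype, Perm.ofSubtype_injective (p := (· ∈ a))⟩ := by
    ext σ
    simp [mem_permsOn_iff_mem_range_ofSubtype, MonoidHom.mem_range]
  rw [this, card_map, card_univ, Fintype.card_perm, Fintype.card_coe]

lemma permsOn_mono (h : a ⊆ b) : permsOn n a ⊆ permsOn n b :=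
  fun _ hσ => mem_permsOn.mpr fun i hi => mem_permsOn.mp hσ i fun hia => hi (h hia)

lemma swap_mem_permsOn {i j : Fin n} (hi : i ∈ a) (hj : j ∈ a) : swap i j ∈ permsOn n a :=
  mem_permsOn.mpr fun _ hl => swap_apply_of_ne_of_ne (by rintro rfl; exact hl hi)
    (by rintro rfl; exact hl hj)

lemma commute_of_mem_permsOn (hab : Disjoint a b) (hσ : σ ∈ permsOn n a)
    (hτ : τ ∈ permsOn n b) : Commute σ τ :=
  Perm.Disjoint.commute fun i => by
    by_cases hia : i ∈ a
    · exact Or.inr (mem_permsOn.mp hτ i (disjoint_left.mp hab hia))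
    · exact Or.inl (mem_permsOn.mp hσ i hia)

lemma conj_mem_permsOn_map (σ : Perm (Fin n)) :
    σ * τ * σ⁻¹ ∈ permsOn n (a.map σ.toEmbedding) ↔ τ ∈ permsOn n a := by
  simp only [mem_permsOn, mem_map_equiv, Perm.mul_apply]
  refine ⟨fun h i hi => ?_, fun h i hi => ?_⟩
  · simpa using h (σ i) (by simpa using hi)
  · rw [Perm.inv_def, h _ hi, apply_symm_apply]

lemma compl_map_toEmbedding (σ : Perm (Fin n)) (a : Finset (Fin n)) :
    (a.map σ.toEmbedding)ᶜ = aᶜ.map σ.toEmbedding := by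
  ext i
  simp [mem_map_equiv]

lemma sum_permsOn_mul_right {M : Type*} [AddCommMonoid M] (hσ : σ ∈ permsOn n a)
    (f : Perm (Fin n) → M) : ∑ τ ∈ permsOn n a, f (τ * σ) = ∑ τ ∈ permsOn n a, f τ := by
  refine sum_equiv (Equiv.mulRight σ) (fun τ => ?_) (fun _ _ => rfl)
  rw [mem_permsOn_iff_mem_range_ofSubtype] at hσ
  simp only [mem_permsOn_iff_mem_range_ofSubtype, coe_mulRight]
  exact (Subgroup.mul_mem_cancel_right _ hσ).symm

lemma sum_permsOn_mul_left {M : Type*} [AddCommMonoid M] (hσ : σ ∈ permsOn n a)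
    (f : Perm (Fin n) → M) : ∑ τ ∈ permsOn n a, f (σ * τ) = ∑ τ ∈ permsOn n a, f τ := by
  refine sum_equiv (Equiv.mulLeft σ) (fun τ => ?_) (fun _ _ => rfl)
  rw [mem_permsOn_iff_mem_range_ofSubtype] at hσ
  simp only [mem_permsOn_iff_mem_range_ofSubtype, coe_mulLeft]
  exact (Subgroup.mul_mem_cancel_left _ hσ).symm

lemma sum_permsOn_insert {M : Type*} [AddCommMonoid M] {x : Fin n} (hx : x ∉ a)
    (f : Perm (Fin n) → M) :
    ∑ σ ∈ permsOn n (insert x a), f σ =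
      ∑ j ∈ insert x a, ∑ τ ∈ permsOn n a, f (swap x j * τ) := by
  rw [← sum_product']
  refine (sum_nbij' (fun p => swap x p.1 * p.2) (fun σ => (σ x, swap x (σ x) * σ))
    ?_ ?_ ?_ ?_ fun _ _ => rfl).symm
  · rintro ⟨j, τ⟩ hp
    rw [mem_product] at hp
    have hj := swap_mem_permsOn (mem_insert_self x a) hp.1
    have hτ := permsOn_mono (subset_insert x a) hp.2
    rw [mem_permsOn_iff_mem_range_ofSubtype] at hj hτ ⊢
    exact mul_mem hj hτ
  · intro σ hσ
    rw [mem_product, mem_permsOn]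
    refine ⟨?_, fun i hi => ?_⟩
    · show σ x ∈ insert x a
      by_contra h
      have hσx : σ x = x := σ.injective (mem_permsOn.mp hσ _ h)
      exact h (by rw [hσx]; exact mem_insert_self x a)
    · rw [Perm.mul_apply]
      by_cases hix : i = x
      · rw [hix, swap_apply_right]
      · have hσi : σ i = i := mem_permsOn.mp hσ i (by simp [hix, hi])
        rw [hσi, swap_apply_of_ne_of_ne hix]
        exact fun h => hix (σ.injective (hσi.trans h))
  · rintro ⟨j, τ⟩ hp
    rw [mem_product] at hp
    have hτx : τ x = x := mem_permsOn.mp hp.2 x hx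
    simp [hτx, ← mul_assoc]
  · intro σ _
    simp [← mul_assoc]

end PermsOn

section PermAvg

variable {K V : Type*} [Field K] [AddCommGroup V] [Module K V] {n : ℕ}
  (ρ : Perm (Fin n) →* Module.End K V) (χ χ' : Perm (Fin n) →* ℤˣ)
  {a b : Finset (Fin n)} {σ : Perm (Fin n)}

/-- `permAvg ρ 1 a` and `permAvg ρ sign a` are the operators `S_a` and `A_a`. -/
def permAvg (a : Finset (Fin n)) : Module.End K V :=
  ((#a).factorial : K)⁻¹ • ∑ σ ∈ permsOn n a, (χ σ : ℤ) • ρ σ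

lemma units_smul_units_smul {M : Type*} [AddCommGroup M] (ε : ℤˣ) (x : M) :
    (ε : ℤ) • (ε : ℤ) • x = x := by
  rw [smul_smul, ← Units.val_mul, Int.units_mul_self, Units.val_one, one_smul]

lemma permAvg_mul_of_mem (hσ : σ ∈ permsOn n a) :
    permAvg ρ χ a * ρ σ = (χ σ : ℤ) • permAvg ρ χ a := by
  have hterm : ∀ τ, (χ τ : ℤ) • ρ τ * ρ σ = (χ σ : ℤ) • (χ (τ * σ) : ℤ) • ρ (τ * σ) := by
    intro τ
    rw [map_mul χ, Units.val_mul, mul_comm, mul_smul, units_smul_units_smul, map_mul,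
      smul_mul_assoc]
  simp only [permAvg, smul_mul_assoc, sum_mul, hterm, ← smul_sum,
    sum_permsOn_mul_right hσ fun τ => (χ τ : ℤ) • ρ τ]
  exact smul_comm _ _ _

lemma mul_permAvg_of_mem (hσ : σ ∈ permsOn n a) :
    ρ σ * permAvg ρ χ a = (χ σ : ℤ) • permAvg ρ χ a := by
  have hterm : ∀ τ, ρ σ * (χ τ : ℤ) • ρ τ = (χ σ : ℤ) • (χ (σ * τ) : ℤ) • ρ (σ * τ) := by
    intro τ
    rw [map_mul χ, Units.val_mul, mul_smul, units_smul_units_smul, map_mul, mul_smul_comm]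
  simp only [permAvg, mul_smul_comm, mul_sum, hterm, ← smul_sum,
    sum_permsOn_mul_left hσ fun τ => (χ τ : ℤ) • ρ τ]
  exact smul_comm _ _ _

lemma commute_permAvg_of_disjoint (hab : Disjoint a b) (hσ : σ ∈ permsOn n b) :
    Commute (permAvg ρ χ a) (ρ σ) :=
  (Commute.sum_left _ _ _ fun _ hτ =>
    ((commute_of_mem_permsOn hab hτ hσ).map ρ).smul_left _).smul_left _

lemma commute_permAvg_permAvg_of_disjoint (hab : Disjoint a b) :
    Commute (permAvg ρ χ a) (permAvg ρ χ' b) :=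
  (Commute.sum_right _ _ _ fun _ hτ =>
    (commute_permAvg_of_disjoint ρ χ hab hτ).smul_right _).smul_right _

lemma mul_permAvg_eq_permAvg_map_mul (σ : Perm (Fin n)) (a : Finset (Fin n)) :
    ρ σ * permAvg ρ χ a = permAvg ρ χ (a.map σ.toEmbedding) * ρ σ := by
  rw [permAvg, permAvg, card_map, mul_smul_comm, smul_mul_assoc, mul_sum, sum_mul]
  congr 1
  refine sum_equiv (MulAut.conj σ).toEquiv (fun τ => (conj_mem_permsOn_map σ).symm)
    fun τ _ => ?_
  have hρ : σ * τ * σ⁻¹ * σ = σ * τ := by group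
  simp only [MulEquiv.toEquiv_eq_coe, MulEquiv.coe_toEquiv, MulAut.conj_apply, smul_mul_assoc,
    ← map_mul ρ, hρ, mul_smul_comm]
  rw [map_mul χ, map_mul χ, map_inv, mul_comm (χ σ), mul_inv_cancel_right]

variable [CharZero K]

lemma smul_sum_permsOn_const {M : Type*} [AddCommGroup M] [Module K M] (b : Finset (Fin n))
    (x : M) : ((#b).factorial : K)⁻¹ • ∑ _τ ∈ permsOn n b, x = x := by
  rw [sum_const, card_permsOn, ← Nat.cast_smul_eq_nsmul K,
    inv_smul_smul₀ (Nat.cast_ne_zero.mpr (Nat.factorial_ne_zero _))]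

lemma mul_permAvg_eq_self {T : Module.End K V}
    (hT : ∀ τ ∈ permsOn n b, T * ρ τ = (χ τ : ℤ) • T) : T * permAvg ρ χ b = T := by
  rw [permAvg, mul_smul_comm, mul_sum]
  conv_rhs => rw [← smul_sum_permsOn_const (K := K) b T]
  congr 1
  refine sum_congr rfl fun τ hτ => ?_
  rw [mul_smul_comm, hT τ hτ, units_smul_units_smul]

lemma permAvg_mul_eq_self {T : Module.End K V}
    (hT : ∀ τ ∈ permsOn n b, ρ τ * T = (χ τ : ℤ) • T) : permAvg ρ χ b * T = T := by
  rw [permAvg, smul_mul_assoc, sum_mul]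
  conv_rhs => rw [← smul_sum_permsOn_const (K := K) b T]
  congr 1
  refine sum_congr rfl fun τ hτ => ?_
  rw [smul_mul_assoc, hT τ hτ, units_smul_units_smul]

lemma permAvg_mul_permAvg_of_subset (h : b ⊆ a) :
    permAvg ρ χ a * permAvg ρ χ b = permAvg ρ χ a :=
  mul_permAvg_eq_self ρ χ fun _ hτ => permAvg_mul_of_mem ρ χ (permsOn_mono h hτ)

lemma permAvg_mul_permAvg_of_subset' (h : b ⊆ a) :
    permAvg ρ χ b * permAvg ρ χ a = permAvg ρ χ a :=
  permAvg_mul_eq_self ρ χ fun _ hτ => mul_permAvg_of_mem ρ χ (permsOn_mono h hτ)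

lemma permAvg_mul_self (a : Finset (Fin n)) : permAvg ρ χ a * permAvg ρ χ a = permAvg ρ χ a :=
  permAvg_mul_permAvg_of_subset ρ χ subset_rfl

lemma permAvg_mul_permAvg_eq_zero (hσa : σ ∈ permsOn n a) (hσb : σ ∈ permsOn n b)
    (h : χ σ ≠ χ' σ) : permAvg ρ χ a * permAvg ρ χ' b = 0 := by
  have key : ((χ σ : ℤ) - χ' σ) • (permAvg ρ χ a * permAvg ρ χ' b) = 0 := by
    rw [sub_smul, sub_eq_zero, ← smul_mul_assoc, ← permAvg_mul_of_mem ρ χ hσa, mul_assoc,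
      mul_permAvg_of_mem ρ χ' hσb, mul_smul_comm]
  rw [← Int.cast_smul_eq_zsmul K] at key
  refine (smul_eq_zero.mp key).resolve_left ?_
  exact Int.cast_ne_zero.mpr (sub_ne_zero.mpr (Units.val_injective.ne h))

lemma card_succ_smul_permAvg_insert {x : Fin n} (hx : x ∉ b) :
    (#b + 1) • permAvg ρ χ (insert x b) =
      ∑ j ∈ insert x b, (χ (swap x j) : ℤ) • (ρ (swap x j) * permAvg ρ χ b) := by
  have hscalar : ((#b + 1 : ℕ) : K) * ((#b + 1).factorial : K)⁻¹ = ((#b).factorial : K)⁻¹ := by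
    rw [Nat.factorial_succ, Nat.cast_mul]
    field_simp
  rw [permAvg, card_insert_of_notMem hx, sum_permsOn_insert hx fun σ => (χ σ : ℤ) • ρ σ,
    ← Nat.cast_smul_eq_nsmul K,
    smul_smul, hscalar, smul_sum]
  refine sum_congr rfl fun j _ => ?_
  rw [permAvg, mul_smul_comm, smul_comm, mul_sum]
  congr 1
  rw [smul_sum]
  refine sum_congr rfl fun τ _ => ?_
  rw [map_mul, map_mul, Units.val_mul, mul_smul, mul_smul_comm]

end PermAvg

section Mixed

variable {K V : Type*} [Field K] [AddCommGroup V] [Module K V] {n : ℕ}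
  (ρ : Perm (Fin n) →* Module.End K V) {a b c : Finset (Fin n)} {σ : Perm (Fin n)} {x y : Fin n}

/-- `S_a ∘ A_{aᶜ}`; its range `mixedSubspace ρ a` is `H^{⊙a,∧aᶜ}`. -/
def mixedProj (a : Finset (Fin n)) : Module.End K V := permAvg ρ 1 a * permAvg ρ Perm.sign aᶜ

def mixedSubspace (a : Finset (Fin n)) : Submodule K V := LinearMap.range (mixedProj ρ a)

lemma commute_sym_alt_compl (a : Finset (Fin n)) :
    Commute (permAvg ρ 1 a) (permAvg ρ Perm.sign aᶜ) :=
  commute_permAvg_permAvg_of_disjoint ρ 1 Perm.sign disjoint_compl_right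

lemma mixedProj_mul_of_mem (hσ : σ ∈ permsOn n a) :
    mixedProj ρ a * ρ σ = mixedProj ρ a ∧ ρ σ * mixedProj ρ a = mixedProj ρ a := by
  have hS := permAvg_mul_of_mem ρ 1 hσ
  have hS' := mul_permAvg_of_mem ρ 1 hσ
  have hcomm := commute_permAvg_of_disjoint ρ Perm.sign disjoint_compl_left hσ
  simp only [MonoidHom.one_apply, Units.val_one, one_smul] at hS hS'
  exact ⟨by rw [mixedProj, mul_assoc, hcomm.eq, ← mul_assoc, hS],
    by rw [mixedProj, ← mul_assoc, hS']⟩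

lemma mixedProj_mul_of_mem_compl (hσ : σ ∈ permsOn n aᶜ) :
    mixedProj ρ a * ρ σ = (Perm.sign σ : ℤ) • mixedProj ρ a ∧
      ρ σ * mixedProj ρ a = (Perm.sign σ : ℤ) • mixedProj ρ a := by
  have hcomm := commute_permAvg_of_disjoint ρ 1 disjoint_compl_right hσ
  constructor
  · rw [mixedProj, mul_assoc, permAvg_mul_of_mem ρ Perm.sign hσ, mul_smul_comm]
  · rw [mixedProj, ← mul_assoc, ← hcomm.eq, mul_assoc, mul_permAvg_of_mem ρ Perm.sign hσ,
      mul_smul_comm]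

lemma mul_conj_mul_eq {T : Module.End K V} (ε : ℤˣ) (h₁ : T * ρ σ = (ε : ℤ) • T)
    (h₂ : ρ σ * T = (ε : ℤ) • T) (g : Perm (Fin n)) :
    T * ρ (σ * g * σ⁻¹) * T = T * ρ g * T := by
  have h₃ : ρ σ⁻¹ * T = (ε : ℤ) • T := by
    conv_rhs => rw [← one_mul T, ← map_one ρ, ← inv_mul_cancel σ, map_mul, mul_assoc, h₂,
      mul_smul_comm, units_smul_units_smul]
  rw [map_mul, map_mul, ← mul_assoc, ← mul_assoc, h₁, mul_assoc, h₃, smul_mul_assoc,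
    mul_smul_comm, smul_mul_assoc, units_smul_units_smul]

lemma mixedProj_mul_swap_mul (hx : x ∈ a) (hy : y ∉ a) {i j : Fin n} (hi : i ∈ a) (hj : j ∉ a) :
    mixedProj ρ a * ρ (swap i j) * mixedProj ρ a =
      mixedProj ρ a * ρ (swap x y) * mixedProj ρ a := by
  have hσ : swap i j = swap x i * swap x j * (swap x i)⁻¹ := by
    rw [← swap_apply_apply, swap_apply_left,
      swap_apply_of_ne_of_ne (ne_of_mem_of_not_mem hx hj).symm (ne_of_mem_of_not_mem hi hj).symm]
  have hτ : swap x j = swap y j * swap x y * (swap y j)⁻¹ := by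
    rw [← swap_apply_apply, swap_apply_left,
      swap_apply_of_ne_of_ne (ne_of_mem_of_not_mem hx hy) (ne_of_mem_of_not_mem hx hj)]
  have hxi := mixedProj_mul_of_mem ρ (swap_mem_permsOn hx hi)
  have hyj := mixedProj_mul_of_mem_compl ρ (swap_mem_permsOn (mem_compl.mpr hy) (mem_compl.mpr hj))
  rw [hσ, mul_conj_mul_eq ρ 1 (by simpa using hxi.1) (by simpa using hxi.2), hτ,
    mul_conj_mul_eq ρ _ hyj.1 hyj.2]

lemma mul_mixedProj_eq_mixedProj_map_mul (σ : Perm (Fin n)) (a : Finset (Fin n)) :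
    ρ σ * mixedProj ρ a = mixedProj ρ (a.map σ.toEmbedding) * ρ σ := by
  rw [mixedProj, mixedProj, ← mul_assoc, mul_permAvg_eq_permAvg_map_mul, mul_assoc,
    mul_permAvg_eq_permAvg_map_mul, compl_map_toEmbedding, mul_assoc]

lemma map_sym_mixedSubspace_le_iSup (a b : Finset (Fin n)) :
    (mixedSubspace ρ b).map (permAvg ρ 1 a) ≤
      ⨆ b' ∈ {b' : Finset (Fin n) | #b' = #b}, mixedSubspace ρ b' := by
  rintro _ ⟨_, ⟨w, rfl⟩, rfl⟩
  rw [permAvg, LinearMap.smul_apply, LinearMap.sum_apply]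
  refine Submodule.smul_mem _ _ (Submodule.sum_mem _ fun σ _ => ?_)
  rw [MonoidHom.one_apply, Units.val_one, one_smul, ← Module.End.mul_apply,
    mul_mixedProj_eq_mixedProj_map_mul]
  exact Submodule.mem_iSup_of_mem (b.map σ.toEmbedding)
    (Submodule.mem_iSup_of_mem (card_map _) ⟨_, rfl⟩)

variable [CharZero K]

lemma mixedProj_mul_self (a : Finset (Fin n)) : mixedProj ρ a * mixedProj ρ a = mixedProj ρ a := by
  rw [mixedProj, (commute_sym_alt_compl ρ a).symm.mul_mul_mul_comm, permAvg_mul_self,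
    permAvg_mul_self]

lemma mixedProj_apply_of_mem {v : V} (hv : v ∈ mixedSubspace ρ a) : mixedProj ρ a v = v := by
  obtain ⟨w, rfl⟩ := hv
  rw [← Module.End.mul_apply, mixedProj_mul_self]

lemma card_succ_smul_mixedProj_sym_insert (hx : x ∈ a) (hy : y ∉ a) :
    (#a + 1) • (mixedProj ρ a * permAvg ρ 1 (insert y a) * mixedProj ρ a) =
      mixedProj ρ a + #a • (mixedProj ρ a * ρ (swap x y) * mixedProj ρ a) := by
  have hSE : permAvg ρ 1 a * mixedProj ρ a = mixedProj ρ a := by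
    rw [mixedProj, ← mul_assoc, permAvg_mul_self]
  have hterm (i : Fin n) : mixedProj ρ a * (ρ (swap y i) * permAvg ρ 1 a) * mixedProj ρ a =
      mixedProj ρ a * ρ (swap y i) * mixedProj ρ a := by
    rw [mul_assoc, mul_assoc, hSE, ← mul_assoc]
  rw [← smul_mul_assoc, ← mul_smul_comm, card_succ_smul_permAvg_insert ρ 1 hy]
  simp only [MonoidHom.one_apply, Units.val_one, one_smul, mul_sum, sum_mul, hterm]
  rw [sum_insert hy, swap_self, ← Perm.one_def, map_one, mul_one, mixedProj_mul_self,
    sum_congr rfl fun i hi => (swap_comm y i ▸ mixedProj_mul_swap_mul ρ hx hy hi hy), sum_const]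

lemma card_succ_smul_mixedProj_alt_insert (hx : x ∈ a) (hy : y ∉ a) :
    (#aᶜ + 1) • (mixedProj ρ a * permAvg ρ Perm.sign (insert x aᶜ) * mixedProj ρ a) =
      mixedProj ρ a - #aᶜ • (mixedProj ρ a * ρ (swap x y) * mixedProj ρ a) := by
  have hx' : x ∉ aᶜ := notMem_compl.mpr hx
  have hAE : permAvg ρ Perm.sign aᶜ * mixedProj ρ a = mixedProj ρ a := by
    rw [mixedProj, ← mul_assoc, ← (commute_sym_alt_compl ρ a).eq, mul_assoc, permAvg_mul_self]
  have hterm : ∀ j ∈ aᶜ, mixedProj ρ a * ((Perm.sign (swap x j) : ℤ) •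
      (ρ (swap x j) * permAvg ρ Perm.sign aᶜ)) * mixedProj ρ a =
        -(mixedProj ρ a * ρ (swap x y) * mixedProj ρ a) := by
    intro j hj
    rw [Perm.sign_swap (ne_of_mem_of_not_mem hx (mem_compl.mp hj)), mul_assoc, smul_mul_assoc,
      mul_assoc, hAE, mul_smul_comm, ← mul_assoc,
      mixedProj_mul_swap_mul ρ hx hy hx (mem_compl.mp hj), Units.val_neg, Units.val_one,
      neg_one_smul]
  rw [← smul_mul_assoc, ← mul_smul_comm, card_succ_smul_permAvg_insert ρ Perm.sign hx', mul_sum,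
    sum_mul, sum_insert hx', sum_congr rfl hterm, sum_neg_distrib, sum_const, ← sub_eq_add_neg,
    swap_self, ← Perm.one_def, map_one, map_one, Units.val_one, one_smul, one_mul, mul_assoc, hAE,
    mixedProj_mul_self]

/-- For `a` the first `k` positions the two terms are, up to scalars, `d̆_{q-1} d̆*_{q-1}` and
`d̆*_q d̆_q` on `H_{k,q}`. -/
lemma mixedProj_laplacian (hx : x ∈ a) (hy : y ∉ a) :
    (#aᶜ * (#a + 1)) • (mixedProj ρ a * permAvg ρ 1 (insert y a) * mixedProj ρ a) +
      (#a * (#aᶜ + 1)) • (mixedProj ρ a * permAvg ρ Perm.sign (insert x aᶜ) * mixedProj ρ a) =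
        (#a + #aᶜ) • mixedProj ρ a := by
  rw [mul_smul, mul_smul, card_succ_smul_mixedProj_sym_insert ρ hx hy,
    card_succ_smul_mixedProj_alt_insert ρ hx hy]
  module

lemma mixedSubspace_le_ker_sym (h : 1 < #(c \ b)) :
    mixedSubspace ρ b ≤ LinearMap.ker (permAvg ρ 1 c) := by
  obtain ⟨i, hi, j, hj, hij⟩ := one_lt_card.mp h
  rw [mem_sdiff] at hi hj
  have hzero : permAvg ρ 1 c * permAvg ρ Perm.sign bᶜ = 0 :=
    permAvg_mul_permAvg_eq_zero ρ 1 Perm.sign (swap_mem_permsOn hi.1 hj.1)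
      (swap_mem_permsOn (mem_compl.mpr hi.2) (mem_compl.mpr hj.2))
      (by rw [Perm.sign_swap hij, MonoidHom.one_apply]; decide)
  rintro _ ⟨w, rfl⟩
  rw [LinearMap.mem_ker, mixedProj, (commute_sym_alt_compl ρ b).eq, ← Module.End.mul_apply,
    ← mul_assoc, hzero, zero_mul, LinearMap.zero_apply]

lemma map_sym_mixedSubspace_le (h : b ⊆ a) :
    (mixedSubspace ρ b).map (permAvg ρ 1 a) ≤ mixedSubspace ρ a := by
  rintro _ ⟨_, ⟨w, rfl⟩, rfl⟩
  refine ⟨permAvg ρ Perm.sign bᶜ w, ?_⟩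
  rw [mixedProj, mixedProj, ← Module.End.mul_apply, ← Module.End.mul_apply, ← mul_assoc,
    permAvg_mul_permAvg_of_subset ρ 1 h, mul_assoc,
    permAvg_mul_permAvg_of_subset' ρ Perm.sign (compl_subset_compl.mpr h)]

lemma mem_map_sym_of_mem_mixedSubspace (hx : x ∈ a) (hy : y ∉ a) {v : V}
    (hv : v ∈ mixedSubspace ρ a) (hv₀ : permAvg ρ 1 (insert y a) v = 0) :
    v ∈ (mixedSubspace ρ (a.erase x)).map (permAvg ρ 1 a) := by
  have hEA : mixedProj ρ a * permAvg ρ Perm.sign (insert x aᶜ) =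
      permAvg ρ 1 a * mixedProj ρ (a.erase x) := by
    rw [mixedProj, mixedProj, compl_erase, mul_assoc,
      permAvg_mul_permAvg_of_subset' ρ _ (subset_insert x aᶜ), ← mul_assoc,
      permAvg_mul_permAvg_of_subset ρ 1 (erase_subset x a)]
  have hlap := congr($(mixedProj_laplacian ρ hx hy) v)
  simp only [LinearMap.add_apply, LinearMap.smul_apply, Module.End.mul_apply,
    mixedProj_apply_of_mem ρ hv, hv₀, map_zero, smul_zero, zero_add] at hlap
  rw [← Module.End.mul_apply, hEA, ← Nat.cast_smul_eq_nsmul K, ← Nat.cast_smul_eq_nsmul K] at hlap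
  have hn : ((#a + #aᶜ : ℕ) : K) ≠ 0 := by
    have := card_pos.mpr ⟨x, hx⟩
    exact_mod_cast (by omega : #a + #aᶜ ≠ 0)
  refine ⟨(((#a + #aᶜ : ℕ) : K)⁻¹ * (#a * (#aᶜ + 1) : ℕ)) • mixedProj ρ (a.erase x) v,
    Submodule.smul_mem _ _ ⟨v, rfl⟩, ?_⟩
  rw [map_smul, mul_smul, ← Module.End.mul_apply, hlap, inv_smul_smul₀ hn]

theorem mixedSubspace_inf_ker_sym_eq_map (hx : x ∈ a) (hy : y ∉ a) :
    mixedSubspace ρ a ⊓ LinearMap.ker (permAvg ρ 1 (insert y a)) =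
      (mixedSubspace ρ (a.erase x)).map (permAvg ρ 1 a) := by
  refine le_antisymm (fun v hv => mem_map_sym_of_mem_mixedSubspace ρ hx hy hv.1 hv.2)
    (le_inf (map_sym_mixedSubspace_le ρ (erase_subset x a)) ?_)
  rintro _ ⟨w, hw, rfl⟩
  have hxy : 1 < #(insert y a \ a.erase x) :=
    one_lt_card.mpr ⟨x, by simp [hx], y, by simp [hy], ne_of_mem_of_not_mem hx hy⟩
  rw [LinearMap.mem_ker, ← Module.End.mul_apply,
    permAvg_mul_permAvg_of_subset ρ 1 (subset_insert y a)]
  exact mixedSubspace_le_ker_sym ρ hxy hw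

theorem mixedSubspace_inf_iSup_eq_inf_ker_sym {m : ℕ} (hm : #a = m + 1) (hx : x ∈ a)
    (hy : y ∉ a) :
    mixedSubspace ρ a ⊓ ⨆ b ∈ {b : Finset (Fin n) | #b = m}, mixedSubspace ρ b =
      mixedSubspace ρ a ⊓ LinearMap.ker (permAvg ρ 1 (insert y a)) := by
  refine le_antisymm (inf_le_inf_left _ (iSup₂_le fun b hb => mixedSubspace_le_ker_sym ρ ?_)) ?_
  · have := le_card_sdiff b (insert y a)
    rw [card_insert_of_notMem hy, hm, show #b = m from hb] at this
    omega
  · rw [mixedSubspace_inf_ker_sym_eq_map ρ hx hy]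
    refine le_inf (map_sym_mixedSubspace_le ρ (erase_subset x a)) ?_
    have hcard : #(a.erase x) = m := by rw [card_erase_of_mem hx, hm, Nat.add_sub_cancel]
    exact hcard ▸ map_sym_mixedSubspace_le_iSup ρ a (a.erase x)

end Mixed

section TensorPower

variable (K W : Type*) [Field K] [AddCommGroup W] [Module K W] {n : ℕ}

def permRep (n : ℕ) : Perm (Fin n) →* Module.End K (TP K W n) where
  toFun := permMap K W n
  map_one' := by
    ext
    simp [permMap, Perm.one_def]
  map_mul' σ τ := LinearMap.ext fun x => (PiTensorProduct.reindex_reindex τ σ x).symm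

lemma symOn_eq_permAvg (a : Finset (Fin n)) : symOn K W n a = permAvg (permRep K W n) 1 a := by
  simp [symOn, permAvg, permRep]

lemma Hgen_eq_mixedSubspace (a : Finset (Fin n)) :
    Hgen K W n a = mixedSubspace (permRep K W n) a := by
  rw [Hgen, symOn_eq_permAvg]
  rfl

end TensorPower

lemma firstSet_succ {n j : ℕ} (h : j < n) :
    firstSet n (j + 1) = insert ⟨j, h⟩ (firstSet n j) := by
  ext i
  simp only [firstSet, mem_filter, mem_univ, true_and, mem_insert, Fin.ext_iff]
  omega

/-- Characterization of co-exact elements: for `k ≥ 1`, `q ≥ 1`, `n = k + q`,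
`H_{k,q}^- = ker(d̆*_{q-1} : H_{k,q} → H_{k+1,q-1}) = im(d̆*_q : H_{k-1,q+1} → H_{k,q})`,
where `H_{k,q}^- = H_{k,q} ∩ H^{⊙[k-1],∧[q+1]}`. -/
theorem coexact_characterization (k q : ℕ) (hk : 1 ≤ k) (hq : 1 ≤ q) :
    Hmix F H (k + q) k ⊓ HmixSpan F H (k + q) (k - 1) =
      Hmix F H (k + q) k ⊓ LinearMap.ker (dStarOp F H (k + q) (k + 1)) ∧
    Hmix F H (k + q) k ⊓ LinearMap.ker (dStarOp F H (k + q) (k + 1)) =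
      Submodule.map (dStarOp F H (k + q) k) (Hmix F H (k + q) (k - 1)) := by
  obtain ⟨j, rfl⟩ : ∃ j, k = j + 1 := ⟨k - 1, by omega⟩
  have hx : (⟨j, by omega⟩ : Fin (j + 1 + q)) ∈ firstSet _ (j + 1) := by simp [firstSet]
  have hy : (⟨j + 1, by omega⟩ : Fin (j + 1 + q)) ∉ firstSet _ (j + 1) := by simp [firstSet]
  have hker : LinearMap.ker (dStarOp F H (j + 1 + q) (j + 1 + 1)) =
      LinearMap.ker (permAvg (permRep F H _) 1
        (insert ⟨j + 1, by omega⟩ (firstSet _ (j + 1)))) := by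
    rw [dStarOp, LinearMap.ker_smul _ _ (Nat.cast_ne_zero.mpr (Nat.succ_ne_zero _)),
      symOn_eq_permAvg, firstSet_succ]
  have hmap (p) : Submodule.map (dStarOp F H (j + 1 + q) (j + 1)) p =
      p.map (permAvg (permRep F H _) 1 (firstSet _ (j + 1))) := by
    rw [dStarOp, Submodule.map_smul _ _ _ (Nat.cast_ne_zero.mpr (Nat.succ_ne_zero _)),
      symOn_eq_permAvg]
  have hlow : firstSet (j + 1 + q) j = (firstSet _ (j + 1)).erase ⟨j, by omega⟩ := by
    rw [firstSet_succ (by omega), erase_insert (by simp [firstSet])]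
  simp only [Hmix, HmixSpan, Hgen_eq_mixedSubspace, Nat.add_sub_cancel, hker, hmap, hlow]
  exact ⟨mixedSubspace_inf_iSup_eq_inf_ker_sym _
      (by rw [firstSet, Fin.card_filter_val_lt]; omega) hx hy,
    mixedSubspace_inf_ker_sym_eq_map _ hx hy⟩

end
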